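/- Let A = [A1; A2] ∈ R^{m×n} with A1 ∈ R^{m1×n}, A2 ∈ R^{m2×n}, b = (b1,b2) ∈ R^m, c ∈ R^n, σ > 0, and let λ ≥ λ_1(AA^*), the largest eigenvalue of AA^*, and T1 = λI_m − AA^*. Let z̄ ∈ R^n, x̄ ∈ R^n, and y = (y1,y2) ∈ R^{m1} × R^{m2}, and set R_y = x̄/σ + A^*y + z̄ − c. Then the function y' ↦ −⟨b, y'⟩ + δ_D(y') + ⟨x̄, A^*y' + z̄ − c⟩ + (σ/2)‖A^*y' + z̄ − c‖² + (σ/2)‖y' − y‖²_{T1} has a unique minimizer ȳ = (ȳ1, ȳ2) over R^m, given componentwise by ȳ1 = y1 + (1/λ)(b1/σ − A1 R_y) and ȳ2 = Π_{R^{m2}_+}(y2 + (1/λ)(b2/σ − A2 R_y)). -/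

import Mathlib

open scoped RealInnerProductSpace
open Filter Topology

noncomputable section

abbrev Vec (k : ℕ) : Type := EuclideanSpace ℝ (Fin k)

def boxSet (n : ℕ) (l u : Fin n → EReal) : Set (Vec n) :=
  {x | ∀ i, l i ≤ (x i : EReal) ∧ (x i : EReal) ≤ u i}

def coneD (m1 m2 : ℕ) : Set (Vec (m1 + m2)) :=
  {y | ∀ i : Fin (m1 + m2), m1 ≤ (i : ℕ) → 0 ≤ y i}

def normalCone {k : ℕ} (S : Set (Vec k)) (x : Vec k) : Set (Vec k) :=
  {v | ∀ p ∈ S, ⟪v, p - x⟫ ≤ 0}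

open Classical in
def indicatorE {k : ℕ} (S : Set (Vec k)) (x : Vec k) : EReal :=
  if x ∈ S then 0 else ⊤

def suppFn {k : ℕ} (S : Set (Vec k)) (w : Vec k) : EReal :=
  ⨆ v ∈ S, (⟪v, w⟫ : EReal)

def augL (m n : ℕ) (A : Vec n →L[ℝ] Vec m) (b : Vec m) (c : Vec n)
    (D : Set (Vec m)) (C : Set (Vec n)) (σ : ℝ)
    (y : Vec m) (z : Vec n) (x : Vec n) : EReal :=
  ((-⟪b, y⟫ : ℝ) : EReal) + indicatorE D y + suppFn C (-z)
    + ((⟪x, ContinuousLinearMap.adjoint A y + z - c⟫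
        + σ / 2 * ‖ContinuousLinearMap.adjoint A y + z - c‖ ^ 2 : ℝ) : EReal)

def Mop (m n : ℕ) (A : Vec n →L[ℝ] Vec m) (T1 : Vec m →L[ℝ] Vec m) (σ : ℝ)
    (w : Vec m × Vec n × Vec n) : Vec m × Vec n × Vec n :=
  (σ • A (ContinuousLinearMap.adjoint A w.1) + σ • T1 w.1 + A w.2.2, 0,
    ContinuousLinearMap.adjoint A w.1 + σ⁻¹ • w.2.2)

def innerW (m n : ℕ) (w w' : Vec m × Vec n × Vec n) : ℝ :=
  ⟪w.1, w'.1⟫ + ⟪w.2.1, w'.2.1⟫ + ⟪w.2.2, w'.2.2⟫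

def Mnorm (m n : ℕ) (A : Vec n →L[ℝ] Vec m) (T1 : Vec m →L[ℝ] Vec m) (σ : ℝ)
    (w : Vec m × Vec n × Vec n) : ℝ :=
  Real.sqrt (innerW m n w (Mop m n A T1 σ w))

def KKTpoint (m n : ℕ) (A : Vec n →L[ℝ] Vec m) (b : Vec m) (c : Vec n)
    (D : Set (Vec m)) (C : Set (Vec n)) (w : Vec m × Vec n × Vec n) : Prop :=
  w.1 ∈ D ∧ (b - A w.2.2) ∈ normalCone D w.1 ∧
  w.2.2 ∈ C ∧ (-w.2.1) ∈ normalCone C w.2.2 ∧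
  ContinuousLinearMap.adjoint A w.1 + w.2.1 - c = 0


/-- The `y`-subproblem objective of Step 3 of the HPR method with `T1 = λI - AA^*`:
`y' ↦ -⟨b, y'⟩ + δ_D(y') + ⟨x̄, A^*y' + z̄ - c⟩ + (σ/2)‖A^*y' + z̄ - c‖² + (σ/2)‖y' - y‖²_{T1}`. -/
def yObj (m1 m2 n : ℕ) (A : Vec n →L[ℝ] Vec (m1 + m2)) (b : Vec (m1 + m2)) (c : Vec n)
    (σ lam : ℝ) (zbar xbar : Vec n) (y : Vec (m1 + m2)) (y' : Vec (m1 + m2)) : EReal :=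
  ((-⟪b, y'⟫ : ℝ) : EReal) + indicatorE (coneD m1 m2) y'
    + ((⟪xbar, ContinuousLinearMap.adjoint A y' + zbar - c⟫
        + σ / 2 * ‖ContinuousLinearMap.adjoint A y' + zbar - c‖ ^ 2
        + σ / 2 * ⟪y' - y,
            (lam • ContinuousLinearMap.id ℝ (Vec (m1 + m2))
              - A ∘L ContinuousLinearMap.adjoint A) (y' - y)⟫ : ℝ) : EReal)

/-- The closed-form candidate minimizer: `ȳ1 = y1 + (1/λ)(b1/σ - A1 R_y)` on the equality
block and `ȳ2 = Π_{R^{m2}_+}(y2 + (1/λ)(b2/σ - A2 R_y))` on the inequality block. -/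
def ybarFormula (m1 m2 n : ℕ) (A : Vec n →L[ℝ] Vec (m1 + m2)) (b : Vec (m1 + m2))
    (σ lam : ℝ) (Ry : Vec n) (y : Vec (m1 + m2)) : Vec (m1 + m2) :=
  (WithLp.equiv 2 _).symm fun i =>
    if (i : ℕ) < m1 then y i + lam⁻¹ * (b i / σ - (A Ry) i)
    else max 0 (y i + lam⁻¹ * (b i / σ - (A Ry) i))

set_option maxHeartbeats 1000000 in
/-- with `T1 = λI_m - AA^*`, `λ ≥ λ_1(AA^*)`, and
`R_y = x̄/σ + A^*y + z̄ - c`, the `y`-subproblem of the HPR method has the unique minimizer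
given componentwise by `ȳ1 = y1 + (1/λ)(b1/σ - A1 R_y)` and
`ȳ2 = Π_{R^{m2}_+}(y2 + (1/λ)(b2/σ - A2 R_y))`. -/
theorem ySubproblem_unique_minimizer
    (m1 m2 n : ℕ) (A : Vec n →L[ℝ] Vec (m1 + m2)) (hA : A ≠ 0)
    (b : Vec (m1 + m2)) (c : Vec n) (σ : ℝ) (hσ : 0 < σ)
    (lam : ℝ)
    -- λ ≥ λ_1(AA^*), the largest eigenvalue of AA^*
    (hlam : ∀ y : Vec (m1 + m2), ⟪y, A (ContinuousLinearMap.adjoint A y)⟫ ≤ lam * ‖y‖ ^ 2)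
    (zbar xbar : Vec n) (y : Vec (m1 + m2)) :
    (∀ y' : Vec (m1 + m2),
      yObj m1 m2 n A b c σ lam zbar xbar y
          (ybarFormula m1 m2 n A b σ lam
            (σ⁻¹ • xbar + ContinuousLinearMap.adjoint A y + zbar - c) y)
        ≤ yObj m1 m2 n A b c σ lam zbar xbar y y') ∧
    (∀ y' : Vec (m1 + m2),
      (∀ y'' : Vec (m1 + m2),
        yObj m1 m2 n A b c σ lam zbar xbar y y' ≤ yObj m1 m2 n A b c σ lam zbar xbar y y'') →
      y' = ybarFormula m1 m2 n A b σ lam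
            (σ⁻¹ • xbar + ContinuousLinearMap.adjoint A y + zbar - c) y) := by
  classical
  set A' := ContinuousLinearMap.adjoint A with hA'
  have hσ0 : σ ≠ 0 := hσ.ne'
  -- λ > 0
  have hlam0 : 0 < lam := by
    have hx : ∃ x, A x ≠ 0 := by
      by_contra h
      push_neg at h
      exact hA (ContinuousLinearMap.ext fun x => by simp [h x])
    obtain ⟨x, hx⟩ := hx
    have hu : (0:ℝ) < ‖A x‖ ^ 2 := by
      have := norm_pos_iff.mpr hx
      positivity
    have h1 : ⟪A x, A (A' (A x))⟫ = ‖A' (A x)‖ ^ 2 := by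
      rw [← real_inner_self_eq_norm_sq]
      exact (ContinuousLinearMap.adjoint_inner_left A (A' (A x)) (A x)).symm
    have h2 : A' (A x) ≠ 0 := by
      intro h0
      have hh : ⟪A' (A x), x⟫ = ‖A x‖ ^ 2 := by
        rw [hA', ContinuousLinearMap.adjoint_inner_left, real_inner_self_eq_norm_sq]
      rw [h0] at hh
      simp at hh
      nlinarith
    have h3 : (0:ℝ) < ‖A' (A x)‖ ^ 2 := by
      have := norm_pos_iff.mpr h2
      positivity
    have h4 := hlam (A x)
    rw [h1] at h4
    nlinarith
  have hlam' : lam ≠ 0 := hlam0.ne'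
  set r : Vec n := A' y + zbar - c with hr
  set Ry : Vec n := σ⁻¹ • xbar + A' y + zbar - c with hRy
  have hRyr : Ry = σ⁻¹ • xbar + r := by rw [hRy, hr]; abel
  set v : Vec (m1 + m2) := lam⁻¹ • (σ⁻¹ • b - A Ry) with hv
  set p : Vec (m1 + m2) := y + v with hp
  set ybar : Vec (m1 + m2) := ybarFormula m1 m2 n A b σ lam Ry y with hybar
  -- p componentwise
  have hpi : ∀ i : Fin (m1 + m2), p i = y i + lam⁻¹ * (b i / σ - (A Ry) i) := by
    intro i
    rw [hp, hv]
    simp only [PiLp.add_apply, PiLp.smul_apply, PiLp.sub_apply, smul_eq_mul]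
    ring
  have hybari : ∀ i : Fin (m1 + m2), ybar i = if (i:ℕ) < m1 then p i else max 0 (p i) := by
    intro i
    rw [hybar, ybarFormula]
    simp only [WithLp.equiv_symm_apply, WithLp.ofLp_toLp]
    rw [hpi]
  -- real smooth part
  set S : Vec (m1 + m2) → ℝ := fun y' => -⟪b, y'⟫
      + (⟪xbar, A' y' + zbar - c⟫ + σ / 2 * ‖A' y' + zbar - c‖ ^ 2
        + σ / 2 * ⟪y' - y,
            (lam • ContinuousLinearMap.id ℝ (Vec (m1 + m2)) - A ∘L A') (y' - y)⟫) with hS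
  have hObj_mem : ∀ y' : Vec (m1 + m2), y' ∈ coneD m1 m2 →
      yObj m1 m2 n A b c σ lam zbar xbar y y' = ((S y' : ℝ) : EReal) := by
    intro y' hy'
    rw [yObj, indicatorE, if_pos hy', add_zero, ← EReal.coe_add]
  have hObj_not : ∀ y' : Vec (m1 + m2), y' ∉ coneD m1 m2 →
      yObj m1 m2 n A b c σ lam zbar xbar y y' = ⊤ := by
    intro y' hy'
    rw [yObj, indicatorE, if_neg hy', EReal.coe_add_top, EReal.top_add_coe]
  -- key quadratic identity
  set C : ℝ := S y - σ * lam / 2 * ‖y - p‖ ^ 2 with hCdef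
  have hkey : ∀ y' : Vec (m1 + m2), S y' = σ * lam / 2 * ‖y' - p‖ ^ 2 + C := by
    intro y'
    set d : Vec (m1 + m2) := y' - y with hd
    have e1 : A' y' + zbar - c = A' d + r := by
      rw [hd, hr, map_sub]; abel
    have e2 : ‖A' d + r‖ ^ 2 = ‖A' d‖ ^ 2 + 2 * ⟪A' d, r⟫ + ‖r‖ ^ 2 :=
      norm_add_sq_real _ _
    have e3 : ⟪d, (lam • ContinuousLinearMap.id ℝ (Vec (m1 + m2)) - A ∘L A') d⟫
        = lam * ‖d‖ ^ 2 - ‖A' d‖ ^ 2 := by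
      rw [ContinuousLinearMap.sub_apply, inner_sub_right, ContinuousLinearMap.smul_apply,
        ContinuousLinearMap.id_apply, real_inner_smul_right, real_inner_self_eq_norm_sq,
        ContinuousLinearMap.comp_apply]
      rw [show (⟪d, A (A' d)⟫ : ℝ) = ⟪A' d, A' d⟫ from
        (by rw [hA', ContinuousLinearMap.adjoint_inner_left]),
        real_inner_self_eq_norm_sq]
    have e4 : ⟪xbar, A' d + r⟫ = ⟪A' d, xbar⟫ + ⟪xbar, r⟫ := by
      rw [inner_add_right, real_inner_comm xbar (A' d)]
    have e5 : (⟪b, y'⟫ : ℝ) = ⟪d, b⟫ + ⟪b, y⟫ := by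
      rw [hd, inner_sub_left, real_inner_comm y' b, real_inner_comm y b]
      ring
    have e6 : y' - p = d - v := by rw [hd, hp]; abel
    have e7 : ‖d - v‖ ^ 2 = ‖d‖ ^ 2 - 2 * ⟪d, v⟫ + ‖v‖ ^ 2 := norm_sub_sq_real _ _
    have e8 : (⟪d, v⟫ : ℝ) = lam⁻¹ * (σ⁻¹ * ⟪d, b⟫ - (σ⁻¹ * ⟪A' d, xbar⟫ + ⟪A' d, r⟫)) := by
      rw [hv, real_inner_smul_right, inner_sub_right, real_inner_smul_right, hRyr]
      rw [show (⟪d, A (σ⁻¹ • xbar + r)⟫ : ℝ) = ⟪A' d, σ⁻¹ • xbar + r⟫ from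
        (by rw [hA', ContinuousLinearMap.adjoint_inner_left])]
      rw [inner_add_right, real_inner_smul_right]
    have e9 : ‖y - p‖ ^ 2 = ‖v‖ ^ 2 := by
      have hyp : y - p = -v := by rw [hp]; abel
      rw [hyp, norm_neg]
    have eSy : S y = -⟪b, y⟫ + (⟪xbar, r⟫ + σ / 2 * ‖r‖ ^ 2) := by
      rw [hS]
      simp only [hr, sub_self, map_zero, inner_zero_left, mul_zero, add_zero]
    rw [hS]
    simp only
    rw [e1, e2, e3, e4, e5, e6, e7, e8, hCdef, eSy, e9]
    field_simp
    ring
  clear_value A' r Ry v p ybar S C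
  clear hS hCdef hp hv hr hRy hRyr hybar
  -- ybar is the projection of p on coneD
  have hmemD : ybar ∈ coneD m1 m2 := by
    intro i hi
    rw [hybari i, if_neg (by omega)]
    exact le_max_left _ _
  have hnormsq : ∀ w : Vec (m1 + m2), ‖w‖ ^ 2 = ∑ i, (w i) ^ 2 := by
    intro w
    rw [EuclideanSpace.norm_eq, Real.sq_sqrt (by positivity)]
    simp [Real.norm_eq_abs, sq_abs]
  have hptwise : ∀ y' : Vec (m1 + m2), y' ∈ coneD m1 m2 → ∀ i : Fin (m1 + m2),
      (ybar i - p i) ^ 2 ≤ (y' i - p i) ^ 2 := by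
    intro y' hy' i
    rw [hybari i]
    by_cases hi : (i:ℕ) < m1
    · rw [if_pos hi, sub_self]
      simpa using sq_nonneg (y' i - p i)
    · rw [if_neg hi]
      have h0 : 0 ≤ y' i := hy' i (by omega)
      rcases le_or_gt 0 (p i) with h | h
      · rw [max_eq_right h, sub_self]
        simpa using sq_nonneg (y' i - p i)
      · rw [max_eq_left h.le]
        nlinarith
  have hproj_min : ∀ y' : Vec (m1 + m2), y' ∈ coneD m1 m2 → ‖ybar - p‖ ^ 2 ≤ ‖y' - p‖ ^ 2 := by
    intro y' hy'
    rw [hnormsq, hnormsq]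
    apply Finset.sum_le_sum
    intro i _
    simp only [PiLp.sub_apply]
    exact hptwise y' hy' i
  have hproj_uniq : ∀ y' : Vec (m1 + m2), y' ∈ coneD m1 m2 →
      ‖y' - p‖ ^ 2 ≤ ‖ybar - p‖ ^ 2 → y' = ybar := by
    intro y' hy' hle
    rw [hnormsq, hnormsq] at hle
    simp only [PiLp.sub_apply] at hle
    have heq : ∀ i : Fin (m1 + m2), (y' i - p i) ^ 2 = (ybar i - p i) ^ 2 := by
      intro i
      by_contra hne
      have hlt : (ybar i - p i) ^ 2 < (y' i - p i) ^ 2 :=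
        lt_of_le_of_ne (hptwise y' hy' i) (Ne.symm hne)
      have hsum : ∑ j, (ybar j - p j) ^ 2 < ∑ j, (y' j - p j) ^ 2 :=
        Finset.sum_lt_sum (fun j _ => hptwise y' hy' j) ⟨i, Finset.mem_univ i, hlt⟩
      linarith
    ext i
    rw [hybari i]
    by_cases hi : (i:ℕ) < m1
    · rw [if_pos hi]
      have hh := heq i
      rw [hybari i, if_pos hi] at hh
      nlinarith [hh]
    · rw [if_neg hi]
      have h0 : 0 ≤ y' i := hy' i (by omega)
      have hh := heq i
      rw [hybari i, if_neg hi] at hh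
      rcases le_or_gt 0 (p i) with h | h
      · rw [max_eq_right h] at hh ⊢
        nlinarith [hh]
      · rw [max_eq_left h.le] at hh ⊢
        nlinarith [hh]
  have hcoef : 0 < σ * lam / 2 := by positivity
  constructor
  · intro y'
    by_cases hy' : y' ∈ coneD m1 m2
    · rw [hObj_mem _ hmemD, hObj_mem _ hy', EReal.coe_le_coe_iff, hkey, hkey]
      have h5 := mul_le_mul_of_nonneg_left (hproj_min y' hy') hcoef.le
      linarith
    · rw [hObj_not _ hy']
      exact le_top
  · intro y' hmin
    have h1 := hmin ybar
    rw [hObj_mem _ hmemD] at h1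
    by_cases hy' : y' ∈ coneD m1 m2
    · rw [hObj_mem _ hy', EReal.coe_le_coe_iff, hkey, hkey] at h1
      apply hproj_uniq y' hy'
      have h5 : σ * lam / 2 * ‖y' - p‖ ^ 2 ≤ σ * lam / 2 * ‖ybar - p‖ ^ 2 := by linarith
      exact (mul_le_mul_iff_right₀ hcoef).mp h5
    · rw [hObj_not _ hy'] at h1
      rw [top_le_iff] at h1
      exact absurd h1 (EReal.coe_ne_top _)

end
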